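/- arXiv:2301.08469 — 3 statements merged into one kernel-verified Lean document; each statement's English description precedes it below -/
import Mathlib

section
/- Let T ⊆ List ℕ be a tree (a set of finite sequences closed under taking prefixes) containing the empty sequence, and let ≺ be the transitive closure of the relation R on S = List ℕ ⊕ (List ℕ × Bool) generated as follows (inl σ codes the symbol σ̲, inr (σ, false) codes [σ,∞], inr (σ, true) codes [σ,∞*]): for every σ ∈ List ℕ and b ∈ Bool: inr (σ, b) R inl σ and inl σ R inl σ; for every nonempty σ with immediate predecessor σ⁻ and every b: inr (σ⁻, b) R inr (σ, b); and additionally, whenever σ is nonempty and σ ∉ T: inr (σ⁻, true) R inr (σ, false) and inr (σ, false) R inr (σ, true). If T is well-founded, i.e. for every x : ℕ → ℕ there is k with [x 0, …, x (k−1)] ∉ T, then the space of ideals I(≺) is metrizable. -/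
/-!
Every basic set `[a] = {I | a ∈ I}` is clopen: it is open by definition, and its complement is
open because an ideal `I ∌ a` contains some `b` having no common upper bound with `a`. A countable
family of clopen sets separating points makes `I(≺)` a second countable zero-dimensional T₀
space, hence metrizable by Urysohn.

For the clopen property, if every `b ∈ I` has a common upper bound with `a`, then `a ∈ I`. If `I`
contains a symbol `σ̲`, its only upper bound is itself, so `a ≺ σ̲ ∈ I`. Otherwise `I` consists of
points `[τ,∞]`, `[τ,∞*]` whose sequences `τ` are pairwise comparable and arbitrarily long, so they
trace out an infinite branch; well-foundedness of `T` puts arbitrarily long `τ ∉ T` among them,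
and outside `T` both points over `τ` lie above both points over each proper prefix of `τ`.
-/

/-- An ideal of a (transitive) relation `r` on `S`: a nonempty, downward closed,
directed subset of `S`. -/
def IsIdeal {S : Type*} (r : S → S → Prop) (I : Set S) : Prop :=
  I.Nonempty ∧ (∀ a ∈ I, ∀ b, r b a → b ∈ I) ∧
    ∀ a ∈ I, ∀ b ∈ I, ∃ c ∈ I, r a c ∧ r b c

/-- The space of ideals of a relation `r`. -/
def IdealSpace {S : Type*} (r : S → S → Prop) : Type _ :=
  {I : Set S // IsIdeal r I}

/-- The topology on the space of ideals, generated by the basic sets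
`[a] = {I | a ∈ I}` for `a : S`. -/
instance {S : Type*} (r : S → S → Prop) : TopologicalSpace (IdealSpace r) :=
  TopologicalSpace.generateFrom {U | ∃ a : S, U = {I : IdealSpace r | a ∈ I.1}}

/-- A predicate is recursively enumerable (computably enumerable) if the partial
function `fun a => Part.assert (p a) fun _ => Part.some ()` is partial recursive.
(This is Mathlib's `REPred`, absent from this Mathlib version.) -/
def REPred' {α : Type*} [Primcodable α] (p : α → Prop) : Prop :=
  Partrec fun a => Part.assert (p a) fun _ => Part.some ()

/-- The generating relation of the telophase-type space: `Sum.inl σ` codes the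
symbol `σ̲`, `Sum.inr (σ, false)` codes `[σ,∞]` and `Sum.inr (σ, true)` codes `[σ,∞*]`. -/
def TeloRel (T : Set (List ℕ)) :
    (List ℕ ⊕ (List ℕ × Bool)) → (List ℕ ⊕ (List ℕ × Bool)) → Prop := fun a b =>
  (∃ (σ : List ℕ) (c : Bool), a = Sum.inr (σ, c) ∧ b = Sum.inl σ) ∨
  (∃ σ : List ℕ, a = Sum.inl σ ∧ b = Sum.inl σ) ∨
  (∃ (σ : List ℕ) (c : Bool), σ ≠ [] ∧ a = Sum.inr (σ.dropLast, c) ∧ b = Sum.inr (σ, c)) ∨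
  (∃ σ : List ℕ, σ ≠ [] ∧ σ ∉ T ∧
    ((a = Sum.inr (σ.dropLast, true) ∧ b = Sum.inr (σ, false)) ∨
     (a = Sum.inr (σ, false) ∧ b = Sum.inr (σ, true))))

namespace IdealSpace

variable {S : Type*} {r : S → S → Prop}

theorem isOpen_setOf_mem (a : S) : IsOpen {I : IdealSpace r | a ∈ I.1} :=
  TopologicalSpace.isOpen_generateFrom_of_mem ⟨a, rfl⟩

theorem isClosed_setOf_mem {a : S}
    (h : ∀ I : IdealSpace r, (∀ b ∈ I.1, ∃ c, r a c ∧ r b c) → a ∈ I.1) :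
    IsClosed {I : IdealSpace r | a ∈ I.1} := by
  rw [← isOpen_compl_iff, isOpen_iff_forall_mem_open]
  intro I ha
  obtain ⟨b, hb, hab⟩ : ∃ b ∈ I.1, ∀ c, r a c → ¬r b c := by
    by_contra! h'
    exact ha (h I h')
  refine ⟨{J | b ∈ J.1}, fun J hbJ haJ => ?_, isOpen_setOf_mem b, hb⟩
  obtain ⟨c, -, hac, hbc⟩ := J.2.2.2 a haJ b hbJ
  exact hab c hac hbc

instance : T0Space (IdealSpace r) :=
  t0Space_of_injective_of_continuous (f := fun (I : IdealSpace r) (a : S) => a ∈ I.1)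
    (fun I J h => Subtype.ext (Set.ext fun a => by simp only [congrFun h a]))
    (continuous_pi fun a => continuous_Prop.2 (isOpen_setOf_mem a))

theorem isTopologicalBasis :
    TopologicalSpace.IsTopologicalBasis ((fun f => ⋂₀ f) ''
      {f : Set (Set (IdealSpace r)) | f.Finite ∧
        f ⊆ {U | ∃ a : S, U = {I : IdealSpace r | a ∈ I.1}}}) :=
  TopologicalSpace.isTopologicalBasis_of_subbasis rfl

instance [Countable S] : SecondCountableTopology (IdealSpace r) :=
  TopologicalSpace.SecondCountableTopology.mk' <|
    (Set.countable_range fun a : S => {I : IdealSpace r | a ∈ I.1}).mono <| by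
      rintro _ ⟨a, rfl⟩
      exact ⟨a, rfl⟩

theorem metrizableSpace [Countable S] (h : ∀ a : S, IsClosed {I : IdealSpace r | a ∈ I.1}) :
    TopologicalSpace.MetrizableSpace (IdealSpace r) := by
  have : CompletelyRegularSpace (IdealSpace r) := by
    refine .of_isTopologicalBasis_clopens (isTopologicalBasis.of_isOpen_of_subset
      (fun _ hU => hU.isOpen) ?_)
    rintro _ ⟨f, ⟨hfin, hf⟩, rfl⟩
    refine ⟨isClosed_sInter fun U hU => ?_, hfin.isOpen_sInter fun U hU => ?_⟩ <;>
      obtain ⟨a, rfl⟩ := hf hU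
    exacts [h a, isOpen_setOf_mem a]
  have : T3Space (IdealSpace r) := ⟨⟩
  exact TopologicalSpace.metrizableSpace_of_t3_secondCountable _

end IdealSpace

theorem List.exists_ofFn_prefix_of_forall_prefix_or_prefix {α : Type*} {P : Set (List α)}
    (hP : ∀ l ∈ P, ∀ l' ∈ P, l <+: l' ∨ l' <+: l) (hlong : ∀ n, ∃ l ∈ P, n < l.length) :
    ∃ x : ℕ → α, ∀ k, ∀ l ∈ P, k ≤ l.length → List.ofFn (fun i : Fin k => x i) <+: l := by
  choose g hgP hglen using hlong
  refine ⟨fun n => (g n)[n]'(hglen n), fun k l hl hk => ?_⟩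
  suffices List.ofFn (fun i : Fin k => (g i)[(i : ℕ)]'(hglen i)) = l.take k from
    this ▸ l.take_prefix k
  refine List.ext_getElem (by simp [hk]) fun i hi hi' => ?_
  simp only [List.getElem_ofFn, List.getElem_take]
  rcases hP _ (hgP i) _ hl with h | h
  · exact h.getElem _
  · exact (h.getElem _).symm

namespace TeloRel

open Relation

variable {T : Set (List ℕ)}

/-- The sequence `σ` underlying each of the points `σ̲`, `[σ,∞]`, `[σ,∞*]`. -/
def seq : List ℕ ⊕ (List ℕ × Bool) → List ℕ :=
  Sum.elim id Prod.fst

/-- Strictly increases along every step of `TeloRel` between points `[σ,∞]`, `[σ,∞*]`. -/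
def rank (p : List ℕ × Bool) : ℕ :=
  2 * p.1.length + p.2.toNat

theorem eq_of_inl {σ : List ℕ} {y : List ℕ ⊕ (List ℕ × Bool)} (h : TeloRel T (.inl σ) y) :
    y = .inl σ := by
  rcases h with ⟨_, _, h, _⟩ | ⟨_, h1, h2⟩ | ⟨_, _, _, h, _⟩ | ⟨_, _, _, ⟨h, _⟩ | ⟨h, _⟩⟩ <;>
    simp_all

theorem transGen_eq_of_inl {σ : List ℕ} {y : List ℕ ⊕ (List ℕ × Bool)}
    (h : TransGen (TeloRel T) (.inl σ) y) : y = .inl σ := by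
  induction h with
  | single h => exact eq_of_inl h
  | tail _ h ih => subst ih; exact eq_of_inl h

theorem seq_prefix {x y : List ℕ ⊕ (List ℕ × Bool)} (h : TeloRel T x y) : seq x <+: seq y := by
  rcases h with ⟨σ, _, rfl, rfl⟩ | ⟨σ, rfl, rfl⟩ | ⟨σ, _, -, rfl, rfl⟩ |
      ⟨σ, -, -, ⟨rfl, rfl⟩ | ⟨rfl, rfl⟩⟩
  all_goals simp [seq, List.dropLast_prefix]

theorem transGen_seq_prefix {x y : List ℕ ⊕ (List ℕ × Bool)} (h : TransGen (TeloRel T) x y) :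
    seq x <+: seq y := by
  induction h with
  | single h => exact seq_prefix h
  | tail _ h ih => exact ih.trans (seq_prefix h)

theorem exists_rank_lt {x : List ℕ ⊕ (List ℕ × Bool)} {q : List ℕ × Bool}
    (h : TeloRel T x (.inr q)) : ∃ p, x = .inr p ∧ rank p < rank q := by
  rcases h with ⟨_, _, -, h⟩ | ⟨_, -, h⟩ | ⟨σ, c, hσ, rfl, h⟩ | ⟨σ, hσ, -, ⟨rfl, h⟩ | ⟨rfl, h⟩⟩
  · cases h
  · cases h
  all_goals
    obtain rfl := Sum.inr_injective h
    refine ⟨_, rfl, ?_⟩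
    have := List.length_pos_of_ne_nil hσ
    simp only [rank, List.length_dropLast, Bool.toNat_true, Bool.toNat_false]
    omega

theorem transGen_exists_rank_lt {x : List ℕ ⊕ (List ℕ × Bool)} {q : List ℕ × Bool}
    (h : TransGen (TeloRel T) x (.inr q)) : ∃ p, x = .inr p ∧ rank p < rank q := by
  induction h using TransGen.head_induction_on with
  | single h => exact exists_rank_lt h
  | head h _ ih =>
    obtain ⟨p', rfl, hp'⟩ := ih
    obtain ⟨p, rfl, hp⟩ := exists_rank_lt h
    exact ⟨p, rfl, hp.trans hp'⟩

theorem inr_concat (l : List ℕ) (a : ℕ) (c : Bool) :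
    TeloRel T (.inr (l, c)) (.inr (l ++ [a], c)) :=
  Or.inr <| Or.inr <| Or.inl ⟨l ++ [a], c, by simp, by simp, rfl⟩

theorem inr_true_concat {l : List ℕ} {a : ℕ} (h : l ++ [a] ∉ T) :
    TeloRel T (.inr (l, true)) (.inr (l ++ [a], false)) :=
  Or.inr <| Or.inr <| Or.inr ⟨l ++ [a], by simp, h, .inl ⟨by simp, rfl⟩⟩

theorem inr_false_true {τ : List ℕ} (hτ : τ ≠ []) (h : τ ∉ T) :
    TeloRel T (.inr (τ, false)) (.inr (τ, true)) :=
  Or.inr <| Or.inr <| Or.inr ⟨τ, hτ, h, .inr ⟨rfl, rfl⟩⟩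

theorem reflTransGen_inr {σ τ : List ℕ} (h : σ <+: τ) (c : Bool) :
    ReflTransGen (TeloRel T) (.inr (σ, c)) (.inr (τ, c)) := by
  induction τ using List.reverseRecOn with
  | nil => rw [List.prefix_nil.1 h]
  | append_singleton l a ih =>
    rcases List.prefix_concat_iff.1 h with rfl | h
    · exact .refl
    · exact (ih h).tail (inr_concat l a c)

theorem transGen_inr_of_notMem {σ τ : List ℕ} (h : σ <+: τ) (hlt : σ.length < τ.length)
    (hτ : τ ∉ T) (c c' : Bool) : TransGen (TeloRel T) (.inr (σ, c)) (.inr (τ, c')) := by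
  obtain ⟨l, a, rfl⟩ : ∃ l a, τ = l ++ [a] := by
    obtain h | h := List.eq_nil_or_concat' τ
    · simp [h] at hlt
    · exact h
  have hσ : σ <+: l := (List.prefix_concat_iff.1 h).resolve_left (by rintro rfl; simp at hlt)
  have hfalse : TransGen (TeloRel T) (.inr (σ, c)) (.inr (l ++ [a], false)) := by
    cases c
    · exact .tail' (reflTransGen_inr hσ false) (inr_concat l a false)
    · exact .tail' (reflTransGen_inr hσ true) (inr_true_concat hτ)
  cases c'
  · exact hfalse
  · exact hfalse.tail (inr_false_true (by simp) hτ)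

section Ideal

variable {I : Set (List ℕ ⊕ (List ℕ × Bool))}

theorem seq_prefix_or_prefix (hI : IsIdeal (TransGen (TeloRel T)) I)
    {x y : List ℕ ⊕ (List ℕ × Bool)} (hx : x ∈ I) (hy : y ∈ I) :
    seq x <+: seq y ∨ seq y <+: seq x := by
  obtain ⟨z, -, hxz, hyz⟩ := hI.2.2 x hx y hy
  exact List.prefix_or_prefix_of_prefix (transGen_seq_prefix hxz) (transGen_seq_prefix hyz)

theorem exists_length_gt (hI : IsIdeal (TransGen (TeloRel T)) I) (hinl : ∀ σ, .inl σ ∉ I) (n : ℕ) :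
    ∃ p, .inr p ∈ I ∧ n < p.1.length := by
  have hrank : ∀ m, ∃ p, .inr p ∈ I ∧ m ≤ rank p := by
    intro m
    induction m with
    | zero =>
      obtain ⟨_ | p, hx⟩ := hI.1
      · exact absurd hx (hinl _)
      · exact ⟨p, hx, Nat.zero_le _⟩
    | succ m ih =>
      obtain ⟨p, hp, hm⟩ := ih
      obtain ⟨_ | q, hq, hpq, -⟩ := hI.2.2 _ hp _ hp
      · exact absurd hq (hinl _)
      · obtain ⟨p', hp', hlt⟩ := transGen_exists_rank_lt hpq
        cases Sum.inr_injective hp'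
        exact ⟨q, hq, by omega⟩
  obtain ⟨p, hp, hn⟩ := hrank (2 * n + 2)
  have := Bool.toNat_le p.2
  exact ⟨p, hp, by simp only [rank] at hn; omega⟩

theorem exists_notMem_length_gt (hI : IsIdeal (TransGen (TeloRel T)) I)
    (hT : ∀ σ ∈ T, ∀ τ, τ <+: σ → τ ∈ T)
    (hwf : ∀ x : ℕ → ℕ, ∃ k, (List.ofFn fun i : Fin k => x i) ∉ T)
    (hinl : ∀ σ, .inl σ ∉ I) (n : ℕ) : ∃ p, .inr p ∈ I ∧ p.1 ∉ T ∧ n < p.1.length := by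
  obtain ⟨x, hx⟩ := List.exists_ofFn_prefix_of_forall_prefix_or_prefix
    (P := {τ | ∃ c, .inr (τ, c) ∈ I})
    (fun _ ⟨_, hτ⟩ _ ⟨_, hτ'⟩ => by simpa [seq] using seq_prefix_or_prefix hI hτ hτ')
    fun n => (exists_length_gt hI hinl n).elim fun p hp => ⟨p.1, ⟨p.2, hp.1⟩, hp.2⟩
  obtain ⟨k, hk⟩ := hwf x
  obtain ⟨p, hp, hlen⟩ := exists_length_gt hI hinl (max n k)
  refine ⟨p, hp, fun hpT => hk (hT _ hpT _ (hx k p.1 ⟨p.2, hp⟩ (by omega))), by omega⟩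

theorem mem_of_forall_exists_upper_bound (hI : IsIdeal (TransGen (TeloRel T)) I)
    (hT : ∀ σ ∈ T, ∀ τ, τ <+: σ → τ ∈ T)
    (hwf : ∀ x : ℕ → ℕ, ∃ k, (List.ofFn fun i : Fin k => x i) ∉ T)
    {a : List ℕ ⊕ (List ℕ × Bool)}
    (ha : ∀ b ∈ I, ∃ c, TransGen (TeloRel T) a c ∧ TransGen (TeloRel T) b c) : a ∈ I := by
  rcases em (∃ σ, .inl σ ∈ I) with ⟨σ, hσ⟩ | hinl
  · obtain ⟨c, hac, hσc⟩ := ha _ hσ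
    rw [transGen_eq_of_inl hσc] at hac
    exact hI.2.1 _ hσ _ hac
  obtain ⟨⟨τ, c'⟩, hτI, hτT, hlen⟩ :=
    exists_notMem_length_gt hI hT hwf (not_exists.1 hinl) (seq a).length
  dsimp only at hτT hlen
  obtain ⟨c, hac, hτc⟩ := ha _ hτI
  have hτ : τ <+: seq c := transGen_seq_prefix hτc
  have haτ : seq a <+: τ :=
    (List.prefix_or_prefix_of_prefix (transGen_seq_prefix hac) hτ).resolve_right
      fun h => by have := h.length_le; omega
  cases a with
  | inl σ =>
    rw [transGen_eq_of_inl hac] at hτ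
    have := hτ.length_le
    simp only [seq] at hlen this
    omega
  | inr p => exact hI.2.1 _ hτI _ (transGen_inr_of_notMem haτ hlen hτT _ _)

end Ideal

end TeloRel

theorem stmt13_general (T : Set (List ℕ))
    (hT : ∀ σ ∈ T, ∀ τ, τ <+: σ → τ ∈ T)
    (hwf : ∀ x : ℕ → ℕ, ∃ k, (List.ofFn fun i : Fin k => x i) ∉ T) :
    TopologicalSpace.MetrizableSpace (IdealSpace (Relation.TransGen (TeloRel T))) :=
  IdealSpace.metrizableSpace fun _ =>
    IdealSpace.isClosed_setOf_mem fun I => TeloRel.mem_of_forall_exists_upper_bound I.2 hT hwf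

theorem stmt13 (T : Set (List ℕ)) (hnil : ([] : List ℕ) ∈ T)
    (hT : ∀ σ ∈ T, ∀ τ, τ <+: σ → τ ∈ T)
    (hwf : ∀ x : ℕ → ℕ, ∃ k, (List.ofFn fun i : Fin k => x i) ∉ T) :
    TopologicalSpace.MetrizableSpace (IdealSpace (Relation.TransGen (TeloRel T))) :=
  stmt13_general T hT hwf
end

section
/- Fix a bijection q : ℕ ≃ ℚ and a predicate A : ℕ → Prop. Let Q = {q i | i ∈ ℕ and ∀ a < i, A a} ⊆ ℚ, and let ≺ be the restriction of the usual strict order < of ℚ to Q. Then ≺ is interpolable (as a relation on Q) if and only if A a holds for every a ∈ ℕ. -/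
/-!
For a subset `s` of a linear order, interpolability of `<` means exactly that `s` is dense in
itself and has no least element. If some `A n` fails, the set `Q` only contains `q i` with
`i ≤ n`, so it is finite; it is nonempty (it contains `q 0`), hence has a least element.
If every `A a` holds, then `Q` is all of `ℚ`, which is dense and has no least element.
-/

/-- A relation `r` on `S` is interpolable if for every `y` the initial segment
`{x | r x y}` is nonempty and directed (any two of its elements have an
`r`-upper bound inside it). -/
def Interpolable {S : Type*} (r : S → S → Prop) : Prop :=
  ∀ y : S, (∃ x, r x y) ∧ ∀ a b, r a y → r b y → ∃ c, r c y ∧ r a c ∧ r b c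

theorem interpolable_lt_iff {α : Type*} [LinearOrder α] (s : Set α) :
    Interpolable (fun x y : s => (x : α) < y) ↔
      (∀ b ∈ s, ∃ a ∈ s, a < b) ∧ ∀ a ∈ s, ∀ b ∈ s, a < b → ∃ c ∈ s, a < c ∧ c < b := by
  constructor
  · intro hI
    refine ⟨fun b hb => ?_, fun a ha b hb hab => ?_⟩
    · obtain ⟨⟨a, ha⟩, hab⟩ := (hI ⟨b, hb⟩).1
      exact ⟨a, ha, hab⟩
    · obtain ⟨⟨c, hc⟩, hcb, hac, -⟩ := (hI ⟨b, hb⟩).2 ⟨a, ha⟩ ⟨a, ha⟩ hab hab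
      exact ⟨c, hc, hac, hcb⟩
  · rintro ⟨hnomin, hdense⟩ ⟨y, hy⟩
    refine ⟨?_, fun ⟨a, ha⟩ ⟨b, hb⟩ hay hby => ?_⟩
    · obtain ⟨x, hx, hxy⟩ := hnomin y hy
      exact ⟨⟨x, hx⟩, hxy⟩
    · have hmax : max a b ∈ s := by
        rcases max_choice a b with h | h <;> rw [h] <;> assumption
      obtain ⟨c, hc, hmc, hcy⟩ := hdense (max a b) hmax y hy (max_lt hay hby)
      exact ⟨⟨c, hc⟩, hcy, (le_max_left a b).trans_lt hmc, (le_max_right a b).trans_lt hmc⟩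

section PrefixIndexed

variable {β : Type*} (q : ℕ → β) (A : ℕ → Prop)

theorem prefix_indexed_nonempty : {r | ∃ i, (∀ a < i, A a) ∧ r = q i}.Nonempty :=
  ⟨q 0, 0, fun _ ha => absurd ha (Nat.not_lt_zero _), rfl⟩

theorem prefix_indexed_finite {n : ℕ} (hn : ¬ A n) :
    {r | ∃ i, (∀ a < i, A a) ∧ r = q i}.Finite := by
  refine ((Set.finite_Iic n).image q).subset ?_
  rintro _ ⟨i, hi, rfl⟩
  exact ⟨i, not_lt.1 fun hni => hn (hi n hni), rfl⟩

theorem prefix_indexed_eq_univ (hq : Function.Surjective q) (hA : ∀ a, A a) :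
    {r | ∃ i, (∀ a < i, A a) ∧ r = q i} = Set.univ :=
  Set.eq_univ_of_forall fun r =>
    let ⟨i, hi⟩ := hq r
    ⟨i, fun a _ => hA a, hi.symm⟩

end PrefixIndexed

theorem stmt14 (q : ℕ ≃ ℚ) (A : ℕ → Prop)
    (Q : Set ℚ) (hQ : Q = {r : ℚ | ∃ i : ℕ, (∀ a < i, A a) ∧ r = q i}) :
    Interpolable (fun x y : Q => (x : ℚ) < (y : ℚ)) ↔ ∀ a : ℕ, A a := by
  subst hQ
  rw [interpolable_lt_iff]
  constructor
  · rintro ⟨hnomin, -⟩ n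
    by_contra hn
    obtain ⟨m, hm⟩ :=
      (prefix_indexed_finite q A hn).exists_minimal (prefix_indexed_nonempty q A)
    obtain ⟨x, hx, hxm⟩ := hnomin m hm.prop
    exact hm.not_lt hx hxm
  · intro hA
    rw [prefix_indexed_eq_univ q A q.surjective hA]
    refine ⟨fun b _ => ⟨b - 1, trivial, sub_one_lt b⟩, fun a _ b _ hab => ?_⟩
    obtain ⟨c, hac, hcb⟩ := exists_between hab
    exact ⟨c, trivial, hac, hcb⟩
end

section
/- Let ℓ ≥ 1 and let ≺ be the relation on Fin ℓ × ℚ defined by (m, p) ≺ (n, q) iff m ≤ n and p < q. Call a set S ⊆ Fin ℓ × ℚ an antichain if for all distinct a, b ∈ S neither a ≺ b nor b ≺ a. Then every antichain has at most ℓ elements, and an antichain S is maximal (i.e. for every z ∉ S the set S ∪ {z} is not an antichain) if and only if S has exactly ℓ elements. -/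
/-!
Two distinct points of an antichain never lie in the same column `{m} × ℚ`, since points of one
column are comparable; so an antichain is the graph of a partial function `Fin ℓ → ℚ` and has at
most `ℓ` elements. If every column is occupied, any new point shares a column with an old one, so
the antichain is maximal. If column `m` is empty, antichain-ness forces every point right of `m` to
lie weakly below every point left of `m`, and a height `q` separating these two finite sets gives a
point `(m, q)` that can be added.
-/

open Set

def LeLt {α β : Type*} [LE α] [LT β] (a b : α × β) : Prop := a.1 ≤ b.1 ∧ a.2 < b.2

lemma exists_separating_of_forall_le {β : Type*} [LinearOrder β] [Nonempty β] {s t : Set β}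
    (hs : s.Finite) (ht : t.Finite) (hst : ∀ x ∈ s, ∀ y ∈ t, x ≤ y) :
    ∃ q, (∀ x ∈ s, x ≤ q) ∧ ∀ y ∈ t, q ≤ y := by
  rcases s.eq_empty_or_nonempty with rfl | hs_ne
  · rcases t.eq_empty_or_nonempty with rfl | ht_ne
    · exact ⟨Classical.arbitrary β, by simp⟩
    · obtain ⟨q, -, hmin⟩ := exists_min_image t id ht ht_ne
      exact ⟨q, by simp, hmin⟩
  · obtain ⟨q, hq, hmax⟩ := exists_max_image s id hs hs_ne
    exact ⟨q, hmax, hst q hq⟩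

namespace IsAntichain

variable {α β : Type*} {S : Set (α × β)}

lemma injOn_fst [Preorder α] [LinearOrder β] (hS : IsAntichain LeLt S) : InjOn Prod.fst S := by
  intro a ha b hb hab
  by_contra hne
  rcases lt_trichotomy a.2 b.2 with h | h | h
  · exact hS ha hb hne ⟨hab.le, h⟩
  · exact hne (Prod.ext hab h)
  · exact hS hb ha (Ne.symm hne) ⟨hab.ge, h⟩

lemma finite_of_leLt [Preorder α] [Finite α] [LinearOrder β] (hS : IsAntichain LeLt S) :
    S.Finite :=
  (toFinite _).of_finite_image hS.injOn_fst

lemma ncard_le_card_of_leLt [Preorder α] [Finite α] [LinearOrder β] (hS : IsAntichain LeLt S) :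
    S.ncard ≤ Nat.card α :=
  hS.injOn_fst.ncard_image ▸ ncard_le_card _

lemma image_fst_eq_univ_iff [Preorder α] [Finite α] [LinearOrder β] (hS : IsAntichain LeLt S) :
    Prod.fst '' S = univ ↔ S.ncard = Nat.card α := by
  rw [eq_univ_iff_ncard, hS.injOn_fst.ncard_image]

lemma fst_notMem_image_of_insert [Preorder α] [LinearOrder β] {z : α × β} (hz : z ∉ S)
    (hS : IsAntichain LeLt (insert z S)) : z.1 ∉ Prod.fst '' S :=
  ((injOn_insert hz).1 hS.injOn_fst).2

lemma exists_insert_of_fst_notMem [LinearOrder α] [LinearOrder β] [Nonempty β]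
    (hS : IsAntichain LeLt S) (hfin : S.Finite) {m : α} (hm : m ∉ Prod.fst '' S) :
    ∃ q, IsAntichain LeLt (insert (m, q) S) := by
  have hm' : ∀ a ∈ S, a.1 ≠ m := fun a ha h => hm ⟨a, ha, h⟩
  have hbelow : ∀ x ∈ Prod.snd '' {a ∈ S | m < a.1}, ∀ y ∈ Prod.snd '' {a ∈ S | a.1 < m},
      x ≤ y := by
    rintro _ ⟨a, ⟨ha, hma⟩, rfl⟩ _ ⟨b, ⟨hb, hbm⟩, rfl⟩
    have hne : b ≠ a := fun h => (hbm.trans hma).ne (congrArg Prod.fst h)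
    exact _root_.not_lt.1 fun h => hS hb ha hne ⟨(hbm.trans hma).le, h⟩
  obtain ⟨q, hright, hleft⟩ := exists_separating_of_forall_le
    ((hfin.subset (sep_subset _ _)).image _) ((hfin.subset (sep_subset _ _)).image _) hbelow
  refine ⟨q, hS.insert (fun b hb _ h => ?_) (fun b hb _ h => ?_)⟩
  · have hbm : b.1 < m := h.1.lt_of_ne (hm' b hb)
    exact (hleft _ ⟨b, ⟨hb, hbm⟩, rfl⟩).not_gt h.2
  · have hmb : m < b.1 := h.1.lt_of_ne (hm' b hb).symm
    exact (hright _ ⟨b, ⟨hb, hmb⟩, rfl⟩).not_gt h.2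

lemma forall_not_insert_iff_image_fst_eq_univ [LinearOrder α] [Finite α] [LinearOrder β]
    [Nonempty β] (hS : IsAntichain LeLt S) :
    (∀ z ∉ S, ¬ IsAntichain LeLt (insert z S)) ↔ Prod.fst '' S = univ := by
  refine ⟨fun hmax => eq_univ_of_forall fun m => ?_, fun huniv z hz hzS => ?_⟩
  · by_contra hm
    obtain ⟨q, hq⟩ := hS.exists_insert_of_fst_notMem hS.finite_of_leLt hm
    exact hmax (m, q) (fun h => hm ⟨_, h, rfl⟩) hq
  · exact hzS.fst_notMem_image_of_insert hz (huniv ▸ mem_univ z.1)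

end IsAntichain

theorem stmt16_general (ℓ : ℕ) :
    (∀ S : Set (Fin ℓ × ℚ),
      IsAntichain (fun a b => a.1 ≤ b.1 ∧ a.2 < b.2) S → S.Finite ∧ S.ncard ≤ ℓ) ∧
    (∀ S : Set (Fin ℓ × ℚ), IsAntichain (fun a b => a.1 ≤ b.1 ∧ a.2 < b.2) S →
      ((∀ z ∉ S, ¬ IsAntichain (fun a b => a.1 ≤ b.1 ∧ a.2 < b.2) (insert z S)) ↔
        S.ncard = ℓ)) := by
  refine ⟨fun S (hS : IsAntichain LeLt S) => ⟨hS.finite_of_leLt, ?_⟩,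
    fun S (hS : IsAntichain LeLt S) => ?_⟩
  · simpa using hS.ncard_le_card_of_leLt
  · exact hS.forall_not_insert_iff_image_fst_eq_univ.trans
      (by rw [hS.image_fst_eq_univ_iff, Nat.card_fin])

theorem stmt16 (ℓ : ℕ) (hℓ : 1 ≤ ℓ) :
    (∀ S : Set (Fin ℓ × ℚ),
      IsAntichain (fun a b => a.1 ≤ b.1 ∧ a.2 < b.2) S → S.Finite ∧ S.ncard ≤ ℓ) ∧
    (∀ S : Set (Fin ℓ × ℚ), IsAntichain (fun a b => a.1 ≤ b.1 ∧ a.2 < b.2) S →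
      ((∀ z ∉ S, ¬ IsAntichain (fun a b => a.1 ≤ b.1 ∧ a.2 < b.2) (insert z S)) ↔
        S.ncard = ℓ)) :=
  stmt16_general ℓ
end
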